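/- Let $T_0, T_1$ be rooted perfect finitely branching trees of height $\omega$ without terminal nodes, and let $\gamma : [T_0] \times [T_1] \to 2$. If there is no somewhere dense grid inside $\gamma^{-1}(\{0\})$, then there exists a dense grid inside $\gamma^{-1}(\{1\})$: sets $Y_0 \subseteq [T_0]$, $Y_1 \subseteq [T_1]$, each dense in the respective branch space, with $Y_0 \times Y_1 \subseteq \gamma^{-1}(\{1\})$. -/

import Mathlib

/-- A rooted, perfect, finitely branching tree of height `ω` without terminal nodes,
represented as a set of finite sequences of natural numbers closed under prefixes.
Nodes at level `m` are the members of length `m`. -/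
structure OmegaTree where
  mem : Set (List ℕ)
  root_mem : ([] : List ℕ) ∈ mem
  prefix_closed : ∀ s ∈ mem, ∀ t : List ℕ, t <+: s → t ∈ mem
  finitely_branching : ∀ s ∈ mem, {n : ℕ | s ++ [n] ∈ mem}.Finite
  no_terminal : ∀ s ∈ mem, ∃ n : ℕ, s ++ [n] ∈ mem
  perfect : ∀ s ∈ mem, ∃ t ∈ mem, s <+: t ∧
    ∃ n m : ℕ, n ≠ m ∧ t ++ [n] ∈ mem ∧ t ++ [m] ∈ mem

/-- The branch space of an `OmegaTree`, topologized as a subspace of Baire space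
(the topology of pointwise convergence). -/
def OmegaTree.Branch (T : OmegaTree) : Type :=
  {x : ℕ → ℕ // ∀ m : ℕ, (List.ofFn fun i : Fin m => x i) ∈ T.mem}

instance (T : OmegaTree) : TopologicalSpace T.Branch :=
  inferInstanceAs (TopologicalSpace {x : ℕ → ℕ // ∀ m : ℕ, (List.ofFn fun i : Fin m => x i) ∈ T.mem})

/-- The level-`m` node of a branch. -/
def OmegaTree.Branch.node {T : OmegaTree} (x : T.Branch) (m : ℕ) : List ℕ :=
  List.ofFn fun i : Fin m => x.val i

/-- `S` is an `a`-strong subtree of `T`, where the infinite set `a ⊆ ω` is given by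
its increasing enumeration `a : ℕ → ℕ`: all nodes of `S` lie on `T`-levels `a m`;
there is a unique node at level `a 0`; each node of `S` at level `a (m+1)` extends a
node of `S` at level `a m`; and for each node `s` of `S` at level `a m` and each
immediate successor of `s` in `T` there is exactly one node of `S` at level `a (m+1)`
extending it. -/
def IsStrongSubtree (T : OmegaTree) (a : ℕ → ℕ) (S : Set (List ℕ)) : Prop :=
  S ⊆ T.mem ∧
  (∀ s ∈ S, ∃ m : ℕ, s.length = a m) ∧
  (∃! s : List ℕ, s ∈ S ∧ s.length = a 0) ∧
  (∀ m : ℕ, ∀ t ∈ S, t.length = a (m + 1) →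
    ∃ s ∈ S, s.length = a m ∧ s <+: t) ∧
  (∀ m : ℕ, ∀ s ∈ S, s.length = a m → ∀ n : ℕ, s ++ [n] ∈ T.mem →
    ∃! t : List ℕ, t ∈ S ∧ t.length = a (m + 1) ∧ (s ++ [n]) <+: t)

/-! Only the Baire property and second countability of the branch spaces matter. The invariant is
that the candidate sets `E ⊆ X`, `D ⊆ Y` compatible with the points chosen so far are nonmeagre in
every nonempty open set. If `A` contains no somewhere dense grid, every nonempty open `U` contains
some `x ∈ E` whose section `D ∩ {y | (x, y) ∉ A}` keeps the invariant: otherwise, for some basic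
open `b`, the bad `x` form a nonmeagre set with a countable somewhere dense subset `P`, and
`P × ((b ∩ D) \ ⋃_{x ∈ P} {y ∈ b ∩ D | (x, y) ∉ A})` is a somewhere dense grid inside `A`.
Alternating the coordinates along enumerations of countable bases then produces dense sequences
`xₙ`, `yₙ` with all `(xᵢ, yⱼ) ∉ A`. -/

open Set TopologicalSpace

lemma exists_seq_of_forall_exists_rel {σ : Type*} {p : σ → Prop} (r : ℕ → σ → σ → Prop)
    {s₀ : σ} (h₀ : p s₀) (h : ∀ n s, p s → ∃ t, p t ∧ r n s t) :
    ∃ f : ℕ → σ, ∀ n, p (f n) ∧ r n (f n) (f (n + 1)) := by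
  choose g hg using h
  let F : ℕ → {s // p s} := fun n =>
    Nat.rec ⟨s₀, h₀⟩ (fun n s => ⟨g n s s.2, (hg n s s.2).1⟩) n
  exact ⟨fun n => (F n).1, fun n => ⟨(F n).2, (hg n _ (F n).2).2⟩⟩

section Category

variable {X : Type*} [TopologicalSpace X]

def IsEverywhereNonmeagre (s : Set X) : Prop :=
  ∀ U : Set X, IsOpen U → U.Nonempty → ¬ IsMeagre (U ∩ s)

lemma isEverywhereNonmeagre_univ [BaireSpace X] : IsEverywhereNonmeagre (univ : Set X) :=
  fun _ hU hne => by simpa using not_isMeagre_of_isOpen hU hne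

lemma not_isMeagre_diff {s t : Set X} (hs : ¬ IsMeagre s) (ht : IsMeagre t) :
    ¬ IsMeagre (s \ t) :=
  fun hst => hs <| (hst.union ht).mono fun x hx => by by_cases hxt : x ∈ t <;> simp [hx, hxt]

lemma exists_countable_subset_not_isNowhereDense [SecondCountableTopology X] {s : Set X}
    (hs : ¬ IsMeagre s) : ∃ P ⊆ s, P.Countable ∧ ¬ IsNowhereDense P := by
  obtain ⟨t, htc, htd⟩ := exists_countable_dense s
  refine ⟨(↑) '' t, Subtype.coe_image_subset s t, htc.image _, fun hP => hs ?_⟩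
  exact (hP.closure.mono (Subtype.dense_iff.mp htd)).isMeagre

lemma exists_isOpen_nonempty_seq_denseRange [SecondCountableTopology X] [Nonempty X] :
    ∃ u : ℕ → Set X, (∀ n, IsOpen (u n) ∧ (u n).Nonempty) ∧
      ∀ f : ℕ → X, (∀ n, f n ∈ u n) → DenseRange f := by
  have hB := isBasis_countableBasis X
  obtain ⟨b, hb, -⟩ := hB.exists_subset_of_mem_open (mem_univ (Classical.arbitrary X)) isOpen_univ
  obtain ⟨u, hu⟩ := (countable_countableBasis X).exists_eq_range ⟨b, hb⟩
  have hu_mem : ∀ n, u n ∈ countableBasis X := fun n => hu ▸ mem_range_self n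
  refine ⟨u, fun n => ⟨isOpen_of_mem_countableBasis (hu_mem n),
    nonempty_of_mem_countableBasis (hu_mem n)⟩, fun f hf => hB.dense_iff.2 ?_⟩
  rintro _ ho -
  obtain ⟨n, rfl⟩ := hu ▸ ho
  exact ⟨f n, hf n, mem_range_self n⟩

end Category

section Grid

variable {X Y : Type*} [TopologicalSpace X] [TopologicalSpace Y]

def HasNoSomewhereDenseGrid (A : Set (X × Y)) : Prop :=
  ∀ P Q, P ×ˢ Q ⊆ A → IsNowhereDense P ∨ IsNowhereDense Q

variable {A : Set (X × Y)}

lemma HasNoSomewhereDenseGrid.swap (hA : HasNoSomewhereDenseGrid A) :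
    HasNoSomewhereDenseGrid (Prod.swap ⁻¹' A) :=
  fun P Q hPQ => (hA Q P fun _ hp => hPQ (mk_mem_prod hp.2 hp.1)).symm

lemma HasNoSomewhereDenseGrid.exists_mem_isEverywhereNonmeagre_section
    [SecondCountableTopology X] [SecondCountableTopology Y] (hA : HasNoSomewhereDenseGrid A)
    {E : Set X} {D : Set Y} (hE : IsEverywhereNonmeagre E) (hD : IsEverywhereNonmeagre D)
    {U : Set X} (hU : IsOpen U) (hUne : U.Nonempty) :
    ∃ x ∈ U ∩ E, IsEverywhereNonmeagre (D ∩ {y | (x, y) ∉ A}) := by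
  by_contra! hbad
  have hcover : U ∩ E ⊆
      ⋃ b ∈ countableBasis Y, {x ∈ U ∩ E | IsMeagre (b ∩ (D ∩ {y | (x, y) ∉ A}))} := by
    intro x hx
    obtain ⟨V, hV, ⟨y, hy⟩, hVx⟩ : ∃ V, IsOpen V ∧ V.Nonempty ∧
        IsMeagre (V ∩ (D ∩ {y | (x, y) ∉ A})) := by
      simpa [IsEverywhereNonmeagre] using hbad x hx
    obtain ⟨b, hb, -, hbV⟩ := (isBasis_countableBasis Y).exists_subset_of_mem_open hy hV
    exact mem_biUnion hb ⟨hx, hVx.mono (inter_subset_inter_left _ hbV)⟩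
  obtain ⟨b, hb, hbad_b⟩ := exists_of_not_isMeagre_biUnion (countable_countableBasis Y)
    fun h => hE U hU hUne (h.mono hcover)
  obtain ⟨P, hPsub, hPc, hP⟩ := exists_countable_subset_not_isNowhereDense hbad_b
  have hM : IsMeagre (⋃ x ∈ P, b ∩ (D ∩ {y | (x, y) ∉ A})) :=
    isMeagre_biUnion hPc fun x hx => (hPsub hx).2
  have hQ : ¬ IsNowhereDense ((b ∩ D) \ ⋃ x ∈ P, b ∩ (D ∩ {y | (x, y) ∉ A})) :=
    fun h => not_isMeagre_diff (hD b (isOpen_of_mem_countableBasis hb)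
      (nonempty_of_mem_countableBasis hb)) hM h.isMeagre
  refine (hA P _ ?_).elim hP hQ
  rintro ⟨x, y⟩ ⟨hx, hy⟩
  by_contra hxy
  exact hy.2 (mem_biUnion hx ⟨hy.1.1, hy.1.2, hxy⟩)

lemma HasNoSomewhereDenseGrid.exists_extend
    [SecondCountableTopology X] [SecondCountableTopology Y] (hA : HasNoSomewhereDenseGrid A)
    {E : Set X} {D : Set Y} (hE : IsEverywhereNonmeagre E) (hD : IsEverywhereNonmeagre D)
    {U : Set X} {V : Set Y} (hU : IsOpen U) (hUne : U.Nonempty) (hV : IsOpen V)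
    (hVne : V.Nonempty) :
    ∃ x ∈ U ∩ E, ∃ y ∈ V ∩ D, (x, y) ∉ A ∧ IsEverywhereNonmeagre (E ∩ {x' | (x', y) ∉ A}) ∧
      IsEverywhereNonmeagre (D ∩ {y' | (x, y') ∉ A}) := by
  obtain ⟨x, hx, hD'⟩ := hA.exists_mem_isEverywhereNonmeagre_section hE hD hU hUne
  obtain ⟨y, ⟨hyV, hyD, hxy⟩, hE'⟩ :=
    hA.swap.exists_mem_isEverywhereNonmeagre_section hD' hE hV hVne
  exact ⟨x, hx, y, ⟨hyV, hyD⟩, hxy, hE', hD'⟩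

theorem HasNoSomewhereDenseGrid.exists_dense_prod_subset_compl
    [BaireSpace X] [SecondCountableTopology X] [BaireSpace Y] [SecondCountableTopology Y]
    (hA : HasNoSomewhereDenseGrid A) :
    ∃ (Y₀ : Set X) (Y₁ : Set Y), Dense Y₀ ∧ Dense Y₁ ∧ Y₀ ×ˢ Y₁ ⊆ Aᶜ := by
  rcases isEmpty_or_nonempty X with hX | hX
  · exact ⟨univ, univ, dense_univ, dense_univ, fun p _ => isEmptyElim p.1⟩
  rcases isEmpty_or_nonempty Y with hY | hY
  · exact ⟨univ, univ, dense_univ, dense_univ, fun p _ => isEmptyElim p.2⟩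
  obtain ⟨u, hu, hu_dense⟩ := exists_isOpen_nonempty_seq_denseRange (X := X)
  obtain ⟨v, hv, hv_dense⟩ := exists_isOpen_nonempty_seq_denseRange (X := Y)
  obtain ⟨S, hS⟩ := exists_seq_of_forall_exists_rel
    (p := fun s : Set X × Set Y => IsEverywhereNonmeagre s.1 ∧ IsEverywhereNonmeagre s.2)
    (fun n s t => ∃ x ∈ u n ∩ s.1, ∃ y ∈ v n ∩ s.2, (x, y) ∉ A ∧
      t = (s.1 ∩ {x' | (x', y) ∉ A}, s.2 ∩ {y' | (x, y') ∉ A}))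
    (s₀ := (univ, univ)) ⟨isEverywhereNonmeagre_univ, isEverywhereNonmeagre_univ⟩ fun n s hs => by
      obtain ⟨x, hx, y, hy, hxy, hE, hD⟩ :=
        hA.exists_extend hs.1 hs.2 (hu n).1 (hu n).2 (hv n).1 (hv n).2
      exact ⟨_, ⟨hE, hD⟩, x, hx, y, hy, hxy, rfl⟩
  choose x hx y hy hxy hS_succ using fun n => (hS n).2
  have hE_anti : Antitone fun n => (S n).1 :=
    antitone_nat_of_succ_le fun n => by rw [hS_succ n]; exact inter_subset_left
  have hD_anti : Antitone fun n => (S n).2 :=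
    antitone_nat_of_succ_le fun n => by rw [hS_succ n]; exact inter_subset_left
  have hcross : ∀ i j, (x i, y j) ∉ A := by
    intro i j
    rcases lt_trichotomy i j with hij | rfl | hij
    · have h : y j ∈ (S (i + 1)).2 := hD_anti (Nat.succ_le_of_lt hij) (hy j).2
      rw [hS_succ i] at h
      exact h.2
    · exact hxy i
    · have h : x i ∈ (S (j + 1)).1 := hE_anti (Nat.succ_le_of_lt hij) (hx i).2
      rw [hS_succ j] at h
      exact h.2
  refine ⟨range x, range y, hu_dense x fun n => (hx n).1, hv_dense y fun n => (hy n).1, ?_⟩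
  rintro ⟨_, _⟩ ⟨⟨i, rfl⟩, ⟨j, rfl⟩⟩
  exact hcross i j

end Grid

lemma OmegaTree.isClosed_branches (T : OmegaTree) :
    IsClosed {x : ℕ → ℕ | ∀ m : ℕ, (List.ofFn fun i : Fin m => x i) ∈ T.mem} := by
  have heq : {x : ℕ → ℕ | ∀ m : ℕ, (List.ofFn fun i : Fin m => x i) ∈ T.mem} =
      ⋂ m : ℕ, (fun x : ℕ → ℕ => fun i : Fin m => x i) ⁻¹'
        {f : Fin m → ℕ | List.ofFn f ∈ T.mem} := by
    ext x; simp [mem_iInter]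
  rw [heq]
  exact isClosed_iInter fun m =>
    (isClosed_discrete _).preimage (continuous_pi fun i => continuous_apply _)

instance (T : OmegaTree) : PolishSpace T.Branch := T.isClosed_branches.polishSpace

/-- The strong form of `PG₂` for 2-colorings: if `γ` is a 2-coloring of the product
of the branch spaces of two trees and there is no somewhere dense grid inside
`γ⁻¹{0}`, then there is a (fully) dense grid inside `γ⁻¹{1}`. -/
theorem stmt17 (T₀ T₁ : OmegaTree) (γ : T₀.Branch × T₁.Branch → Fin 2)
    (h : ¬ ∃ (Y₀ : Set T₀.Branch) (Y₁ : Set T₁.Branch)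
          (U₀ : Set T₀.Branch) (U₁ : Set T₁.Branch),
        IsOpen U₀ ∧ U₀.Nonempty ∧ U₀ ⊆ closure Y₀ ∧
        IsOpen U₁ ∧ U₁.Nonempty ∧ U₁ ⊆ closure Y₁ ∧
        Y₀ ×ˢ Y₁ ⊆ γ ⁻¹' {0}) :
    ∃ (Y₀ : Set T₀.Branch) (Y₁ : Set T₁.Branch),
      Dense Y₀ ∧ Dense Y₁ ∧ Y₀ ×ˢ Y₁ ⊆ γ ⁻¹' {1} := by
  have hA : HasNoSomewhereDenseGrid (γ ⁻¹' {0}) := by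
    intro P Q hPQ
    by_contra! hdense
    exact h ⟨P, Q, _, _, isOpen_interior, nonempty_iff_ne_empty.2 hdense.1, interior_subset,
      isOpen_interior, nonempty_iff_ne_empty.2 hdense.2, interior_subset, hPQ⟩
  obtain ⟨Y₀, Y₁, h₀, h₁, hY⟩ := hA.exists_dense_prod_subset_compl
  exact ⟨Y₀, Y₁, h₀, h₁, fun p hp => Fin.eq_one_of_ne_zero _ (hY hp)⟩
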